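/- (Consensus error with respect to the variables.) For the FedMuon iterates, for every iteration t it holds deterministically that (1/K)∑_{k=1}^K ‖X̄_t − X_t^{(k)}‖_F ≤ 2ητ√n. -/

import Mathlib

open MeasureTheory ProbabilityTheory Matrix Finset

noncomputable section

/-- The Frobenius norm of a real `m × n` matrix. -/
def frob {m n : ℕ} (A : Matrix (Fin m) (Fin n) ℝ) : ℝ :=
  Real.sqrt (∑ i, ∑ j, A i j ^ 2)

/-- The nuclear norm of a real matrix: the sum of its singular values,
realized as the trace of `√(AᵀA)`. -/
def nuclearNorm {m n : ℕ} (A : Matrix (Fin m) (Fin n) ℝ) : ℝ :=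
  let hA := (Matrix.posSemidef_conjTranspose_mul_self A).1
  (hA.eigenvectorUnitary.1 * diagonal ((RCLike.ofReal : ℝ → ℝ) ∘ Real.sqrt ∘ hA.eigenvalues) *
    (star hA.eigenvectorUnitary : Matrix (Fin n) (Fin n) ℝ)).trace

/-- `IsMuonDir M D` says that `D = U * Vᵀ` where `M = U * S * Vᵀ` is a reduced singular value
decomposition of `M` (`U`, `V` with orthonormal columns, `S` diagonal with positive diagonal
entries, `r = rank M`). -/
def IsMuonDir {m n : ℕ} (M D : Matrix (Fin m) (Fin n) ℝ) : Prop :=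
  ∃ (r : ℕ) (U : Matrix (Fin m) (Fin r) ℝ) (S : Matrix (Fin r) (Fin r) ℝ)
    (V : Matrix (Fin n) (Fin r) ℝ),
      Uᵀ * U = 1 ∧ Vᵀ * V = 1 ∧ (∀ i j, i ≠ j → S i j = 0) ∧ (∀ i, 0 < S i i) ∧
      M = U * S * Vᵀ ∧ D = U * Vᵀ

/-- Matrices are measurable via the product σ-algebra on their entries. -/
instance matrixMeasurableSpace {m n : ℕ} : MeasurableSpace (Matrix (Fin m) (Fin n) ℝ) :=
  (inferInstance : MeasurableSpace (Fin m → Fin n → ℝ))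

/-- A run of the FedMuon algorithm with `K` workers on `m × n` real matrix variables, over a
probability space `Ω`.  `f k` is the local loss of worker `k` and `grad k` its gradient;
`η` is the learning rate, `β` the momentum parameter, `τ` the communication period;
`X t k`, `M t k`, `D t k` are the variable, momentum, and orthonormalized update direction of
worker `k` at iteration `t`, and `N t k` is the stochastic-gradient noise
(`∇f⁽ᵏ⁾(·;ξ) = ∇f⁽ᵏ⁾(·) + N`), with the noises independent across workers and iterations and
of mean zero (unbiased stochastic gradients). -/
structure FedMuon (m n K : ℕ) (Ω : Type) [MeasureSpace Ω] where
  f : Fin K → Matrix (Fin m) (Fin n) ℝ → ℝ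
  grad : Fin K → Matrix (Fin m) (Fin n) ℝ → Matrix (Fin m) (Fin n) ℝ
  η : ℝ
  β : ℝ
  τ : ℕ
  X0 : Matrix (Fin m) (Fin n) ℝ
  X : ℕ → Fin K → Ω → Matrix (Fin m) (Fin n) ℝ
  M : ℕ → Fin K → Ω → Matrix (Fin m) (Fin n) ℝ
  D : ℕ → Fin K → Ω → Matrix (Fin m) (Fin n) ℝ
  N : ℕ → Fin K → Ω → Matrix (Fin m) (Fin n) ℝ
  eta_pos : 0 < η
  beta_mem : β ∈ Set.Ioo (0 : ℝ) 1
  tau_gt_one : 1 < τ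
  is_grad : ∀ k Y H,
    HasDerivAt (fun s : ℝ => f k (Y + s • H)) (∑ i, ∑ j, grad k Y i j * H i j) 0
  init_X : ∀ k ω, X 0 k ω = X0
  init_M : ∀ k ω, M 0 k ω = grad k X0 + N 0 k ω
  muon_dir : ∀ t k ω, IsMuonDir (M t k ω) (D t k ω)
  step_X : ∀ t k ω, ¬ τ ∣ (t + 1) → X (t + 1) k ω = X t k ω - η • D t k ω
  step_X_comm : ∀ t k ω, τ ∣ (t + 1) →
    X (t + 1) k ω = (K : ℝ)⁻¹ • ∑ k', (X t k' ω - η • D t k' ω)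
  step_M : ∀ t k ω, ¬ τ ∣ (t + 1) →
    M (t + 1) k ω = (1 - β) • M t k ω + β • (grad k (X t k ω - η • D t k ω) + N (t + 1) k ω)
  step_M_comm : ∀ t k ω, τ ∣ (t + 1) →
    M (t + 1) k ω = (K : ℝ)⁻¹ •
      ∑ k', ((1 - β) • M t k' ω + β • (grad k' (X t k' ω - η • D t k' ω) + N (t + 1) k' ω))
  noise_meas : ∀ t k, Measurable (N t k)
  noise_indep : iIndepFun (fun p : ℕ × Fin K => N p.1 p.2) volume
  noise_mean : ∀ t k i j, ∫ ω, N t k ω i j = 0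

variable {m n K : ℕ} {Ω : Type} [MeasureSpace Ω]

/-- The global loss `f = (1/K) ∑ₖ f⁽ᵏ⁾`. -/
def fbar (P : FedMuon m n K Ω) (Y : Matrix (Fin m) (Fin n) ℝ) : ℝ :=
  (K : ℝ)⁻¹ * ∑ k, P.f k Y

/-- The global gradient `∇f = (1/K) ∑ₖ ∇f⁽ᵏ⁾`. -/
def gradbar (P : FedMuon m n K Ω) (Y : Matrix (Fin m) (Fin n) ℝ) : Matrix (Fin m) (Fin n) ℝ :=
  (K : ℝ)⁻¹ • ∑ k, P.grad k Y

/-- The averaged iterate `X̄ₜ = (1/K) ∑ₖ Xₜ⁽ᵏ⁾`. -/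
def Xbar (P : FedMuon m n K Ω) (t : ℕ) (ω : Ω) : Matrix (Fin m) (Fin n) ℝ :=
  (K : ℝ)⁻¹ • ∑ k, P.X t k ω

/-- The averaged momentum `M̄ₜ = (1/K) ∑ₖ Mₜ⁽ᵏ⁾`. -/
def Mbar (P : FedMuon m n K Ω) (t : ℕ) (ω : Ω) : Matrix (Fin m) (Fin n) ℝ :=
  (K : ℝ)⁻¹ • ∑ k, P.M t k ω

/-- Assumption 1: each local gradient is `L`-Lipschitz in the Frobenius norm. -/
def SmoothGrad (P : FedMuon m n K Ω) (L : ℝ) : Prop :=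
  ∀ k Y Z, frob (P.grad k Y - P.grad k Z) ≤ L * frob (Y - Z)

/-- Assumption 2: the stochastic-gradient noise has variance at most `σ²`. -/
def BoundedVariance (P : FedMuon m n K Ω) (σ : ℝ) : Prop :=
  ∀ t k, ∫ ω, frob (P.N t k ω) ^ 2 ≤ σ ^ 2

/-- Assumption 3: heavy-tailed noise, `E‖noise‖_F^p ≤ σ^p` with tail index `p`. -/
def HeavyTailedNoise (P : FedMuon m n K Ω) (p σ : ℝ) : Prop :=
  ∀ t k, ∫ ω, frob (P.N t k ω) ^ p ≤ σ ^ p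

/-- Assumption 4: bounded heterogeneity `⟮1/K⟯ ∑ₖ ‖∇f⁽ᵏ⁾(X) − ∇f(X)‖_F² ≤ δ²`. -/
def Heterogeneity (P : FedMuon m n K Ω) (δ : ℝ) : Prop :=
  ∀ Y, (K : ℝ)⁻¹ * ∑ k, frob (P.grad k Y - gradbar P Y) ^ 2 ≤ δ ^ 2



lemma frob_eq_norm {m n : ℕ} (A : Matrix (Fin m) (Fin n) ℝ) :
    frob A = ‖(WithLp.equiv 2 ((Fin m × Fin n) → ℝ)).symm (fun p => A p.1 p.2)‖ := by
  rw [EuclideanSpace.norm_eq, frob, Fintype.sum_prod_type]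
  simp [Real.norm_eq_abs, sq_abs]

lemma frob_nonneg {m n : ℕ} (A : Matrix (Fin m) (Fin n) ℝ) : 0 ≤ frob A := Real.sqrt_nonneg _

lemma frob_add_le {m n : ℕ} (A B : Matrix (Fin m) (Fin n) ℝ) :
    frob (A + B) ≤ frob A + frob B := by
  rw [frob_eq_norm, frob_eq_norm, frob_eq_norm]
  exact norm_add_le ((WithLp.equiv 2 ((Fin m × Fin n) → ℝ)).symm (fun p => A p.1 p.2))
    ((WithLp.equiv 2 ((Fin m × Fin n) → ℝ)).symm (fun p => B p.1 p.2))

lemma frob_smul {m n : ℕ} (c : ℝ) (A : Matrix (Fin m) (Fin n) ℝ) :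
    frob (c • A) = |c| * frob A := by
  rw [frob_eq_norm, frob_eq_norm]
  have : ((WithLp.equiv 2 ((Fin m × Fin n) → ℝ)).symm (fun p => (c • A) p.1 p.2))
      = c • ((WithLp.equiv 2 ((Fin m × Fin n) → ℝ)).symm (fun p => A p.1 p.2)) := rfl
  rw [this, norm_smul, Real.norm_eq_abs]

lemma frob_zero {m n : ℕ} : frob (0 : Matrix (Fin m) (Fin n) ℝ) = 0 := by
  simp [frob]

lemma frob_sub_comm {m n : ℕ} (A B : Matrix (Fin m) (Fin n) ℝ) :
    frob (A - B) = frob (B - A) := by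
  have : A - B = (-1 : ℝ) • (B - A) := by simp
  rw [this, frob_smul]; norm_num

lemma frob_sum_le {m n : ℕ} {ι : Type*} (s : Finset ι) (f : ι → Matrix (Fin m) (Fin n) ℝ) :
    frob (∑ i ∈ s, f i) ≤ ∑ i ∈ s, frob (f i) := by
  classical
  induction s using Finset.induction with
  | empty => simp [frob_zero]
  | @insert a s h ih =>
    rw [Finset.sum_insert h, Finset.sum_insert h]
    exact (frob_add_le _ _).trans (by linarith)

lemma frob_muon_le {m n : ℕ} {M D : Matrix (Fin m) (Fin n) ℝ} (h : IsMuonDir M D) :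
    frob D ≤ Real.sqrt n := by
  obtain ⟨r, U, S, V, hU, hV, -, -, -, hD⟩ := h
  have hUo : ∀ j j', ∑ a, U a j * U a j' = if j = j' then (1:ℝ) else 0 := by
    intro j j'
    have := congrFun (congrFun hU j) j'
    simpa [Matrix.mul_apply, Matrix.transpose_apply, Matrix.one_apply] using this
  have hDab : ∀ a b, D a b = ∑ j, U a j * V b j := by
    intro a b; simp [hD, Matrix.mul_apply, Matrix.transpose_apply]
  have col : ∀ b, ∑ a, (D a b)^2 = ∑ j, (V b j)^2 := by
    intro b
    calc ∑ a, (D a b)^2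
        = ∑ a, ∑ j, ∑ j', (U a j * V b j) * (U a j' * V b j') := by
          refine Finset.sum_congr rfl fun a _ => ?_
          rw [hDab, sq, Finset.sum_mul_sum]
      _ = ∑ j, ∑ j', (∑ a, U a j * U a j') * (V b j * V b j') := by
          rw [Finset.sum_comm]
          refine Finset.sum_congr rfl fun j _ => ?_
          rw [Finset.sum_comm]
          refine Finset.sum_congr rfl fun j' _ => ?_
          rw [Finset.sum_mul]
          exact Finset.sum_congr rfl fun a _ => by ring
      _ = ∑ j, (V b j)^2 := by
          simp [hUo, ite_mul, sq]
  have hproj : ∀ b, ∑ j, (V b j)^2 ≤ 1 := by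
    intro b
    have hPP : (V * Vᵀ) * (V * Vᵀ) = V * Vᵀ := by
      rw [Matrix.mul_assoc, ← Matrix.mul_assoc Vᵀ, hV, Matrix.one_mul]
    have hsym : ∀ c d, (V*Vᵀ) c d = (V*Vᵀ) d c := by
      intro c d; simp [Matrix.mul_apply, Matrix.transpose_apply, mul_comm]
    have h1 : (V*Vᵀ) b b = ∑ c, ((V*Vᵀ) b c)^2 := by
      have := congrFun (congrFun hPP b) b
      rw [Matrix.mul_apply] at this
      rw [← this]
      exact Finset.sum_congr rfl fun c _ => by rw [hsym c b, sq]
    have h2 : ((V*Vᵀ) b b)^2 ≤ (V*Vᵀ) b b :=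
      (Finset.single_le_sum (f := fun c => ((V*Vᵀ) b c)^2)
        (fun c _ => sq_nonneg _) (Finset.mem_univ b)).trans_eq h1.symm
    have h3 : (V*Vᵀ) b b ≤ 1 := by nlinarith
    have h4 : (V*Vᵀ) b b = ∑ j, (V b j)^2 := by
      simp [Matrix.mul_apply, Matrix.transpose_apply, sq]
    linarith [h4 ▸ h3]
  have key : ∑ i, ∑ j, D i j ^ 2 ≤ (n : ℝ) := by
    rw [Finset.sum_comm]
    calc ∑ b, ∑ a, (D a b)^2 = ∑ b, ∑ j, (V b j)^2 :=
          Finset.sum_congr rfl fun b _ => col b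
      _ ≤ ∑ _b : Fin n, (1:ℝ) := Finset.sum_le_sum fun b _ => hproj b
      _ = n := by simp
  rw [frob]
  exact Real.sqrt_le_sqrt key


lemma fedmuon_pairwise {m n K : ℕ} {Ω : Type} [MeasureSpace Ω] (P : FedMuon m n K Ω)
    (ω : Ω) : ∀ t k k', frob (P.X t k ω - P.X t k' ω) ≤ 2 * P.η * ((t % P.τ : ℕ) : ℝ) * Real.sqrt n := by
  intro t
  induction t with
  | zero =>
    intro k k'
    simp [P.init_X, frob_zero]
  | succ t ih =>
    intro k k'
    by_cases h : P.τ ∣ (t + 1)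
    · rw [P.step_X_comm t k ω h, P.step_X_comm t k' ω h, sub_self, frob_zero]
      have := P.eta_pos
      positivity
    · rw [P.step_X t k ω h, P.step_X t k' ω h]
      have hτpos : 0 < P.τ := by have := P.tau_gt_one; omega
      have hd := Nat.div_add_mod t P.τ
      have h1 : t % P.τ < P.τ := Nat.mod_lt _ hτpos
      have hmod : (t + 1) % P.τ = t % P.τ + 1 := by
        by_cases he : t % P.τ + 1 = P.τ
        · refine absurd ⟨t / P.τ + 1, ?_⟩ h
          rw [Nat.mul_add, Nat.mul_one]
          omega
        · conv_lhs => rw [← hd]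
          rw [Nat.add_assoc, Nat.mul_add_mod]
          exact Nat.mod_eq_of_lt (by omega)
      have hDk := frob_muon_le (P.muon_dir t k ω)
      have hDk' := frob_muon_le (P.muon_dir t k' ω)
      have hη := P.eta_pos
      have hrw : (P.X t k ω - P.η • P.D t k ω) - (P.X t k' ω - P.η • P.D t k' ω)
          = (P.X t k ω - P.X t k' ω) + ((-P.η) • P.D t k ω + P.η • P.D t k' ω) := by
        ext i j
        simp [Matrix.sub_apply, Matrix.add_apply, Matrix.smul_apply, smul_eq_mul]
        ring
      rw [hrw]
      have step1 : frob ((P.X t k ω - P.X t k' ω) + ((-P.η) • P.D t k ω + P.η • P.D t k' ω))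
          ≤ frob (P.X t k ω - P.X t k' ω) + (frob ((-P.η) • P.D t k ω) + frob (P.η • P.D t k' ω)) :=
        (frob_add_le _ _).trans (add_le_add_right (frob_add_le _ _) _)
      have e1 : frob ((-P.η) • P.D t k ω) = P.η * frob (P.D t k ω) := by
        rw [frob_smul, abs_neg, abs_of_pos hη]
      have e2 : frob (P.η • P.D t k' ω) = P.η * frob (P.D t k' ω) := by
        rw [frob_smul, abs_of_pos hη]
      have b1 : P.η * frob (P.D t k ω) ≤ P.η * Real.sqrt n :=
        mul_le_mul_of_nonneg_left hDk hη.le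
      have b2 : P.η * frob (P.D t k' ω) ≤ P.η * Real.sqrt n :=
        mul_le_mul_of_nonneg_left hDk' hη.le
      have ihs := ih k k'
      rw [hmod]
      push_cast
      calc frob ((P.X t k ω - P.X t k' ω) + ((-P.η) • P.D t k ω + P.η • P.D t k' ω))
          ≤ frob (P.X t k ω - P.X t k' ω) + (P.η * frob (P.D t k ω) + P.η * frob (P.D t k' ω)) := by
            rw [← e1, ← e2]; exact step1
        _ ≤ 2 * P.η * (t % P.τ : ℕ) * Real.sqrt n + (P.η * Real.sqrt n + P.η * Real.sqrt n) := by
            exact add_le_add ihs (add_le_add b1 b2)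
        _ = 2 * P.η * ((t % P.τ : ℕ) + 1) * Real.sqrt n := by ring

/-- **Lemma 2 of the paper** (consensus error w.r.t. the variables): deterministically,
`(1/K) ∑ₖ ‖X̄ₜ − Xₜ⁽ᵏ⁾‖_F ≤ 2ητ√n`. -/
theorem fedmuon_variable_consensus
    (hK : 1 < K) (P : FedMuon m n K Ω) (t : ℕ) (ω : Ω) :
    (K : ℝ)⁻¹ * ∑ k, frob (Xbar P t ω - P.X t k ω) ≤ 2 * P.η * P.τ * Real.sqrt n := by
  have hK0 : (0:ℝ) < (K:ℝ) := by exact_mod_cast Nat.zero_lt_of_lt hK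
  have hKne : (K:ℝ) ≠ 0 := ne_of_gt hK0
  have hη := P.eta_pos
  have hτpos : 0 < P.τ := by have := P.tau_gt_one; omega
  have hb : ∀ k, frob (Xbar P t ω - P.X t k ω) ≤ 2 * P.η * P.τ * Real.sqrt n := by
    intro k
    have hXb : Xbar P t ω - P.X t k ω = (K:ℝ)⁻¹ • ∑ k', (P.X t k' ω - P.X t k ω) := by
      rw [Finset.sum_sub_distrib, smul_sub, Xbar]
      congr 1
      rw [Finset.sum_const, Finset.card_univ, Fintype.card_fin,
        ← Nat.cast_smul_eq_nsmul ℝ, smul_smul, inv_mul_cancel₀ hKne, one_smul]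
    have hpair : ∀ k', frob (P.X t k' ω - P.X t k ω) ≤ 2 * P.η * (t % P.τ : ℕ) * Real.sqrt n :=
      fun k' => fedmuon_pairwise P ω t k' k
    have hmodle : ((t % P.τ : ℕ) : ℝ) ≤ (P.τ : ℝ) := by
      exact_mod_cast (Nat.mod_lt _ hτpos).le
    calc frob (Xbar P t ω - P.X t k ω)
        = (K:ℝ)⁻¹ * frob (∑ k', (P.X t k' ω - P.X t k ω)) := by
          rw [hXb, frob_smul, abs_of_pos (by positivity)]
      _ ≤ (K:ℝ)⁻¹ * ∑ k', frob (P.X t k' ω - P.X t k ω) :=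
          mul_le_mul_of_nonneg_left (frob_sum_le _ _) (by positivity)
      _ ≤ (K:ℝ)⁻¹ * ∑ _k' : Fin K, (2 * P.η * (t % P.τ : ℕ) * Real.sqrt n) :=
          mul_le_mul_of_nonneg_left (Finset.sum_le_sum fun k' _ => hpair k') (by positivity)
      _ = 2 * P.η * (t % P.τ : ℕ) * Real.sqrt n := by
          rw [Finset.sum_const, Finset.card_univ, Fintype.card_fin, nsmul_eq_mul]
          field_simp
      _ ≤ 2 * P.η * P.τ * Real.sqrt n := by
          gcongr
  calc (K : ℝ)⁻¹ * ∑ k, frob (Xbar P t ω - P.X t k ω)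
      ≤ (K : ℝ)⁻¹ * ∑ _k : Fin K, (2 * P.η * P.τ * Real.sqrt n) :=
        mul_le_mul_of_nonneg_left (Finset.sum_le_sum fun k _ => hb k) (by positivity)
    _ = 2 * P.η * P.τ * Real.sqrt n := by
        rw [Finset.sum_const, Finset.card_univ, Fintype.card_fin, nsmul_eq_mul]
        field_simp


end
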